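/- Let P = {x ∈ ℝⁿ : Ax = b, Bx ≤ d} be a pointed integral polyhedron whose stacked constraint matrix (A; B) is totally unimodular. If P is a 0/1-polytope, i.e., all vertices of P lie in {0,1}ⁿ and P is bounded, then every circuit walk in P is a vertex walk. -/

import Mathlib

/-!
For a circuit `g` of a totally unimodular system, `B g ∈ {0, ±1}ᵐ`: adding slack columns on the
support of `B g` yields a totally unimodular matrix whose kernel is the line through `(g, -B g)`;
by Cramer's rule that line is spanned by a `{0, ±1}`-vector, and since `g` is primitive the
scaling factor is `±1`.

A maximal step `x + α g` from a `0/1` point `x` is stopped by a row `i` with `(B g)ᵢ > 0`, hence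
`(B g)ᵢ = 1`, tight at `x + α g`. The face on which row `i` is tight contains a vertex, which is
`0/1`, so `dᵢ` is an integer, and so is `α = dᵢ - (B x)ᵢ`. Thus `x + α g` is an integer point of
`P ⊆ [0, 1]ⁿ`, i.e. a `0/1` point, and the `0/1` points of `P` are vertices.
-/

open Matrix

/-- The polyhedron `{x ∈ ℝⁿ : A x = b, B x ≤ d}`. -/
def PolyAB {mA mB n : ℕ} (A : Matrix (Fin mA) (Fin n) ℝ) (b : Fin mA → ℝ)
    (B : Matrix (Fin mB) (Fin n) ℝ) (d : Fin mB → ℝ) : Set (Fin n → ℝ) :=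
  {x | A.mulVec x = b ∧ ∀ i, B.mulVec x i ≤ d i}

/-- A real vector with integer components whose greatest common divisor is 1. -/
def IsCoprimeIntegerVec {n : ℕ} (g : Fin n → ℝ) : Prop :=
  ∃ gz : Fin n → ℤ, (∀ i, g i = (gz i : ℝ)) ∧ Finset.univ.gcd gz = 1

/-- `g` is a circuit of the system `A x = b`, `B x ≤ d`:  `g ∈ ker A \ {0}` with coprime integer
components such that `B g` is support-minimal over `{B x : x ∈ ker A \ {0}}`. -/
def IsCircuit {mA mB n : ℕ} (A : Matrix (Fin mA) (Fin n) ℝ)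
    (B : Matrix (Fin mB) (Fin n) ℝ) (g : Fin n → ℝ) : Prop :=
  A.mulVec g = 0 ∧ g ≠ 0 ∧ IsCoprimeIntegerVec g ∧
    ¬ ∃ y : Fin n → ℝ, A.mulVec y = 0 ∧ y ≠ 0 ∧
      {i | B.mulVec y i ≠ 0} ⊂ {i | B.mulVec g i ≠ 0}

/-- A circuit walk: a sequence of points of `P` starting and ending at vertices,
each step a maximal step along a circuit direction. -/
def IsCircuitWalk {n : ℕ} (P : Set (Fin n → ℝ)) (Circ : (Fin n → ℝ) → Prop)
    {k : ℕ} (y : Fin (k + 1) → Fin n → ℝ) : Prop :=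
  y 0 ∈ P.extremePoints ℝ ∧ y (Fin.last k) ∈ P.extremePoints ℝ ∧
  ∀ i : Fin k, y i.castSucc ∈ P ∧
    ∃ (g : Fin n → ℝ) (α : ℝ), Circ g ∧ 0 < α ∧
      y i.succ = y i.castSucc + α • g ∧
      ∀ β : ℝ, α < β → y i.castSucc + β • g ∉ P

/-- A circuit walk is a vertex walk if all of its points are vertices of `P`. -/
def IsVertexWalk {n : ℕ} (P : Set (Fin n → ℝ)) {k : ℕ} (y : Fin (k + 1) → Fin n → ℝ) : Prop :=
  ∀ i, y i ∈ P.extremePoints ℝ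

namespace Matrix

variable {m n R K : Type*}

theorem IsTotallyUnimodular.det_mem_range [CommRing R] [Fintype n] [DecidableEq n]
    {D : Matrix n n R} (hD : D.IsTotallyUnimodular) : D.det ∈ Set.range SignType.cast := by
  simpa using (isTotallyUnimodular_iff_fintype D).1 hD n id id

theorem IsTotallyUnimodular.inv_apply_mem_range [CommRing R] [Fintype n]
    [DecidableEq n] {D : Matrix n n R} (hD : D.IsTotallyUnimodular) (i j : n) :
    D⁻¹ i j ∈ Set.range SignType.cast := by
  have hadj : D.adjugate i j ∈ Set.range SignType.cast := by
    have : D.updateRow j (Pi.single i 1) =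
        (D.fromRows 1).submatrix (Function.update Sum.inl j (Sum.inr i)) id := by
      ext r c
      rcases eq_or_ne r j with rfl | hr
      · simp [one_apply, Pi.single_apply, eq_comm]
      · simp [hr]
    rw [adjugate_apply, this]
    exact ((fromRows_one_isTotallyUnimodular_iff D).2 hD).submatrix _ _ |>.det_mem_range
  obtain ⟨s, hs⟩ := hD.det_mem_range
  obtain ⟨t, ht⟩ := hadj
  refine ⟨s * t, ?_⟩
  rw [inv_def, smul_apply, ← hs, ← ht, smul_eq_mul, SignType.coe_mul]
  congr 1
  rcases s with _ | _ | _
  · simp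
  · simpa using (Ring.inverse_unit (-1 : Rˣ)).symm
  · simp

theorem IsTotallyUnimodular.mulVec_apply_mem_bot [CommRing R] [Fintype n] {M : Matrix m n R}
    (hM : M.IsTotallyUnimodular) {w : n → R} (hw : ∀ j, w j ∈ (⊥ : Subring R)) (i : m) :
    (M *ᵥ w) i ∈ (⊥ : Subring R) := by
  refine Subring.sum_mem _ fun j _ => Subring.mul_mem _ ?_ (hw j)
  obtain ⟨s, hs⟩ := hM.apply i j
  exact Subring.mem_bot.2 ⟨s, (SignType.intCast_cast s).trans hs⟩

theorem exists_submatrix_det_ne_zero [Field K] [Fintype m] [Fintype n] [DecidableEq n]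
    (N : Matrix m n K) (hN : Function.Injective N.mulVec) :
    ∃ f : n → m, (N.submatrix f id).det ≠ 0 := by
  have hspan : Submodule.span K (Set.range N.row) = ⊤ := by
    apply Submodule.eq_top_of_finrank_eq
    rw [← rank_eq_finrank_span_row]
    exact LinearMap.finrank_range_of_inj hN
  obtain ⟨κ, a, -, hspan', hli⟩ := exists_linearIndependent' K N.row
  rw [hspan] at hspan'
  let basis := Module.Basis.mk hli hspan'.ge
  have : Finite κ := Module.Finite.finite_basis basis
  have := Fintype.ofFinite κ
  have hcard : Fintype.card n = Fintype.card κ := by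
    rw [← Module.finrank_eq_card_basis basis, Module.finrank_fintype_fun_eq_card]
  let e := Fintype.equivOfCardEq hcard
  refine ⟨a ∘ e, (isUnit_iff_isUnit_det _).1 ?_ |>.ne_zero⟩
  rw [← linearIndependent_rows_iff_isUnit]
  exact hli.comp e e.injective

theorem IsTotallyUnimodular.fromRows_replicateRow_single [CommRing R] [DecidableEq n]
    {M : Matrix m n R} (hM : M.IsTotallyUnimodular) (j : n) :
    (M.fromRows (replicateRow Unit (Pi.single j 1))).IsTotallyUnimodular := by
  have : M.fromRows (replicateRow Unit (Pi.single j 1)) =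
      (M.fromRows 1).submatrix (Sum.map id fun _ => j) id := by
    ext (r | _) c <;> simp [one_apply, Pi.single_apply, eq_comm]
  rw [this]
  exact ((fromRows_one_isTotallyUnimodular_iff M).2 hM).submatrix _ _

theorem mulVec_fromRows_replicateRow_single [CommRing R] [Fintype n] [DecidableEq n]
    (M : Matrix m n R) (j : n) (x : n → R) :
    M.fromRows (replicateRow Unit (Pi.single j 1)) *ᵥ x = (M *ᵥ x) ⊕ᵥ fun _ => x j := by
  ext (r | _) <;> simp [mulVec, replicateRow]

theorem injective_mulVec_fromRows_replicateRow_single [Field K] [Fintype n] [DecidableEq n]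
    {M : Matrix m n K} {u : n → K} (hker : LinearMap.ker M.mulVecLin = K ∙ u) {j : n}
    (hj : u j ≠ 0) :
    Function.Injective (M.fromRows (replicateRow Unit (Pi.single j 1))).mulVec := by
  refine (injective_iff_map_eq_zero (mulVecLin _)).2 fun x hx => ?_
  rw [mulVecLin_apply, mulVec_fromRows_replicateRow_single] at hx
  have hMx : x ∈ LinearMap.ker M.mulVecLin := funext fun r => congrFun hx (Sum.inl r)
  obtain ⟨a, rfl⟩ := Submodule.mem_span_singleton.1 (hker ▸ hMx)
  have : a * u j = 0 := congrFun hx (Sum.inr ())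
  rw [(mul_eq_zero.1 this).resolve_right hj, zero_smul]

theorem IsTotallyUnimodular.exists_sign_vector_of_ker_eq_span [Field K] [Fintype m] [Fintype n]
    [DecidableEq n] {M : Matrix m n K} (hM : M.IsTotallyUnimodular) {u : n → K} (hu : u ≠ 0)
    (hker : LinearMap.ker M.mulVecLin = K ∙ u) :
    ∃ c : K, ∃ h : n → K, (∀ j, h j ∈ Set.range SignType.cast) ∧ u = c • h := by
  obtain ⟨j0, hj0⟩ : ∃ j0, u j0 ≠ 0 := Function.ne_iff.1 hu
  set N := M.fromRows (replicateRow Unit (Pi.single j0 1))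
  obtain ⟨f, hf⟩ := exists_submatrix_det_ne_zero N
    (injective_mulVec_fromRows_replicateRow_single hker hj0)
  set D := N.submatrix f id
  have hDunit : IsUnit D.det := isUnit_iff_ne_zero.2 hf
  have hDinj : Function.Injective D.mulVec :=
    mulVec_injective_iff_isUnit.2 ((isUnit_iff_isUnit_det D).2 hDunit)
  have hfinj : f.Injective := fun r₁ r₂ h => by
    by_contra hne
    exact hf (det_zero_of_row_eq hne (by ext; simp [D, h]))
  have hMu : M *ᵥ u = 0 := by simpa using hker.ge (Submodule.mem_span_singleton_self u)
  have hDu (r : n) : (D *ᵥ u) r = ((0 : m → K) ⊕ᵥ fun _ => u j0) (f r) := by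
    rw [← hMu, ← mulVec_fromRows_replicateRow_single]; rfl
  -- Exactly one row of `D` is `e_{j0}`: at least one as `u ≠ 0`, at most one as `f` is injective.
  obtain ⟨r0, hr0⟩ : ∃ r0, f r0 = Sum.inr () := by
    by_contra! hnone
    refine hu (hDinj ?_)
    ext r
    rcases hfr : f r with i | ⟨⟩
    · simp [hDu, hfr]
    · exact absurd hfr (hnone r)
  have hDu' : D *ᵥ u = Pi.single r0 (u j0) := by
    ext r
    rcases eq_or_ne r r0 with rfl | hr
    · simp [hDu, hr0]
    · rcases hfr : f r with i | ⟨⟩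
      · simp [hDu, hfr, hr]
      · exact absurd (hfinj (hfr.trans hr0.symm)) hr
  refine ⟨u j0, fun j => D⁻¹ j r0, fun j => ?_, ?_⟩
  · exact (hM.fromRows_replicateRow_single j0).submatrix f id |>.inv_apply_mem_range j r0
  calc u = (D⁻¹ * D) *ᵥ u := by rw [nonsing_inv_mul _ hDunit, one_mulVec]
    _ = D⁻¹ *ᵥ Pi.single r0 (u j0) := by rw [← mulVec_mulVec, hDu']
    _ = _ := by ext j; simp [mulVec_single, mul_comm]

end Matrix

theorem IsCoprimeIntegerVec.eq_one_or_eq_neg_one_of_eq_smul {n : ℕ} {g : Fin n → ℝ}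
    (hg : IsCoprimeIntegerVec g) {c : ℝ} {t : Fin n → SignType} (hgt : g = c • fun j => (t j : ℝ)) :
    c = 1 ∨ c = -1 := by
  obtain ⟨gz, hgz, hgcd⟩ := hg
  obtain ⟨j1, hj1⟩ : ∃ j, gz j ≠ 0 := by
    by_contra! h
    simp [Finset.gcd_eq_zero_iff.2 fun j _ => h j] at hgcd
  have ht1 : t j1 ≠ 0 := fun h => hj1 (by simpa [hgt, h, eq_comm] using hgz j1)
  -- `c = gz j1 * t j1` is an integer dividing every `gz j = c * t j`.
  set m : ℤ := gz j1 * t j1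
  have hcm : c = m := by
    have h1 : c * t j1 = gz j1 := by simpa [hgt] using hgz j1
    have hsq : (t j1 : ℝ) * t j1 = 1 := by
      revert ht1; generalize t j1 = s; rcases s with _ | _ | _ <;> simp
    simp only [m, Int.cast_mul, SignType.intCast_cast]
    rw [← h1, mul_assoc, hsq, mul_one]
  have hdvd : m ∣ 1 := by
    rw [← hgcd]
    refine Finset.dvd_gcd fun j _ => ⟨t j, ?_⟩
    have h := hgz j
    rw [hgt, hcm] at h
    have : ((gz j : ℤ) : ℝ) = ((m * t j : ℤ) : ℝ) := by simpa [SignType.intCast_cast] using h.symm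
    exact_mod_cast this
  rcases Int.isUnit_iff.1 (isUnit_of_dvd_one hdvd) with h | h <;> simp [hcm, h]

section Circuit

variable {mA mB n : ℕ} {A : Matrix (Fin mA) (Fin n) ℝ} {B : Matrix (Fin mB) (Fin n) ℝ}
  {g : Fin n → ℝ}

theorem IsCircuit.mem_span_of_support_subset {x : Fin n → ℝ} (hg : IsCircuit A B g)
    (hBg : B *ᵥ g ≠ 0) (hAx : A *ᵥ x = 0) (hBx : ∀ i, (B *ᵥ g) i = 0 → (B *ᵥ x) i = 0) :
    x ∈ ℝ ∙ g := by
  obtain ⟨hAg, -, -, hmin⟩ := hg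
  obtain ⟨i0, hi0⟩ := Function.ne_iff.1 hBg
  -- Eliminating coordinate `i0` would give a kernel vector with strictly smaller support.
  set w := (B *ᵥ g) i0 • x - (B *ᵥ x) i0 • g
  have hBw (i : Fin mB) : (B *ᵥ w) i = (B *ᵥ g) i0 * (B *ᵥ x) i - (B *ᵥ x) i0 * (B *ᵥ g) i := by
    simp [w, mulVec_sub, mulVec_smul]
  have hw : w = 0 := by
    by_contra hw
    refine hmin ⟨w, by simp [w, mulVec_sub, mulVec_smul, hAx, hAg], hw, ?_, fun h => ?_⟩
    · intro i hi hgi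
      simp [hBw, hBx i hgi, hgi] at hi
    · exact h hi0 (by rw [hBw]; ring)
  refine Submodule.mem_span_singleton.2 ⟨(B *ᵥ x) i0 / (B *ᵥ g) i0, ?_⟩
  rw [sub_eq_zero] at hw
  rw [div_eq_inv_mul, mul_smul, ← hw, smul_smul, inv_mul_cancel₀ hi0, one_smul]


def circuitSlack (B : Matrix (Fin mB) (Fin n) ℝ) (g : Fin n → ℝ) :
    Matrix (Fin mB) {i // (B *ᵥ g) i ≠ 0} ℝ :=
  of fun i s => if i = s.1 then 1 else 0

theorem circuitSlack_apply (i : Fin mB) (s : {i // (B *ᵥ g) i ≠ 0}) :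
    circuitSlack B g i s = if i = s.1 then 1 else 0 :=
  rfl

theorem circuitSlack_mulVec_val (z : {i // (B *ᵥ g) i ≠ 0} → ℝ) (s : {i // (B *ᵥ g) i ≠ 0}) :
    (circuitSlack B g *ᵥ z) s = z s := by
  change ∑ s', circuitSlack B g s s' * z s' = z s
  rw [Fintype.sum_eq_single s fun s' hs' => by
      rw [circuitSlack_apply, if_neg fun h => hs' (Subtype.ext h).symm, zero_mul],
    circuitSlack_apply, if_pos rfl, one_mul]

theorem circuitSlack_mulVec_of_eq_zero (z : {i // (B *ᵥ g) i ≠ 0} → ℝ) {i : Fin mB}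
    (hi : (B *ᵥ g) i = 0) : (circuitSlack B g *ᵥ z) i = 0 := by
  change ∑ s, circuitSlack B g i s * z s = 0
  exact Finset.sum_eq_zero fun s _ => by
    rw [circuitSlack_apply, if_neg fun h : i = s => s.2 (h ▸ hi), zero_mul]

theorem isTotallyUnimodular_fromBlocks_circuitSlack (hTU : (fromRows A B).IsTotallyUnimodular) :
    (fromBlocks A 0 B (circuitSlack B g)).IsTotallyUnimodular := by
  have : fromBlocks A 0 B (circuitSlack B g) =
      (fromCols (fromRows A B) (1 : Matrix (Fin mA ⊕ Fin mB) (Fin mA ⊕ Fin mB) ℝ)).submatrix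
        id (Sum.map id (Sum.inr ∘ Subtype.val)) := by
    ext (r | r) (c | c) <;> simp [circuitSlack_apply, one_apply]
  rw [this]
  exact ((fromCols_one_isTotallyUnimodular_iff _).2 hTU).submatrix _ _

theorem IsCircuit.ker_fromBlocks_circuitSlack (hg : IsCircuit A B g) (hBg : B *ᵥ g ≠ 0) :
    LinearMap.ker (fromBlocks A 0 B (circuitSlack B g)).mulVecLin =
      ℝ ∙ (g ⊕ᵥ fun s : {i // (B *ᵥ g) i ≠ 0} => -(B *ᵥ g) s) := by
  ext w
  rw [LinearMap.mem_ker, mulVecLin_apply, Submodule.mem_span_singleton, fromBlocks_mulVec,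
    ← Sum.elim_zero_zero, Sum.elim_eq_iff]
  simp only [Matrix.zero_mulVec, add_zero]
  constructor
  · rintro ⟨hA, hB⟩
    have hB' (r : Fin mB) : (B *ᵥ (w ∘ Sum.inl)) r + (circuitSlack B g *ᵥ (w ∘ Sum.inr)) r = 0 :=
      congrFun hB r
    obtain ⟨a, ha⟩ := Submodule.mem_span_singleton.1 <| hg.mem_span_of_support_subset hBg hA
      fun r hr => by simpa [circuitSlack_mulVec_of_eq_zero _ hr] using hB' r
    refine ⟨a, ?_⟩
    ext (j | s)
    · simpa using congrFun ha j
    · have := hB' s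
      rw [circuitSlack_mulVec_val, ← ha, mulVec_smul] at this
      simp only [Pi.smul_apply, smul_eq_mul, Function.comp_apply] at this
      simp only [Pi.smul_apply, Sum.elim_inr, smul_eq_mul, mul_neg]
      linarith
  · rintro ⟨a, rfl⟩
    have hinl : (a • (g ⊕ᵥ fun s : {i // (B *ᵥ g) i ≠ 0} => -(B *ᵥ g) s)) ∘ Sum.inl = a • g := rfl
    refine ⟨by rw [hinl, mulVec_smul, hg.1, smul_zero], funext fun r => ?_⟩
    by_cases hr : (B *ᵥ g) r = 0
    · simp [hinl, mulVec_smul, hr, circuitSlack_mulVec_of_eq_zero _ hr]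
    · have := circuitSlack_mulVec_val
        ((a • (g ⊕ᵥ fun s : {i // (B *ᵥ g) i ≠ 0} => -(B *ᵥ g) s)) ∘ Sum.inr) ⟨r, hr⟩
      rw [Pi.add_apply, this, hinl]
      simp [mulVec_smul]

theorem IsCircuit.mulVec_apply_mem_range (hTU : (fromRows A B).IsTotallyUnimodular)
    (hg : IsCircuit A B g) (i : Fin mB) : (B *ᵥ g) i ∈ Set.range SignType.cast := by
  by_cases hBg : B *ᵥ g = 0
  · exact ⟨0, by simp [hBg]⟩
  obtain ⟨c, h, hh, hu⟩ :=
    (isTotallyUnimodular_fromBlocks_circuitSlack hTU).exists_sign_vector_of_ker_eq_span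
      (fun h => hg.2.1 (funext fun j => congrFun h (Sum.inl j)))
      (hg.ker_fromBlocks_circuitSlack hBg)
  choose t ht using hh
  have hc := hg.2.2.1.eq_one_or_eq_neg_one_of_eq_smul (t := t ∘ Sum.inl)
    (funext fun j => by simpa [ht] using congrFun hu (Sum.inl j))
  by_cases hi : (B *ᵥ g) i = 0
  · exact ⟨0, by simp [hi]⟩
  have hBgi : (B *ᵥ g) i = -(c * t (Sum.inr ⟨i, hi⟩)) := by
    have := congrFun hu (Sum.inr ⟨i, hi⟩)
    simp only [Sum.elim_inr, Pi.smul_apply, smul_eq_mul, ← ht] at this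
    linarith
  rcases hc with rfl | rfl
  · exact ⟨-t (Sum.inr ⟨i, hi⟩), by simp [hBgi]⟩
  · exact ⟨t (Sum.inr ⟨i, hi⟩), by simp [hBgi]⟩

end Circuit

section ExtremePoints

variable {E : Type*} [AddCommGroup E] [Module ℝ E] [TopologicalSpace E] [T2Space E]
  [IsTopologicalAddGroup E] [ContinuousSMul ℝ E] [LocallyConvexSpace ℝ E] {s : Set E}

theorem IsCompact.exists_mem_extremePoints_isMaxOn (hs : IsCompact s) (hne : s.Nonempty)
    (l : StrongDual ℝ E) : ∃ v ∈ s.extremePoints ℝ, IsMaxOn l s v := by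
  obtain ⟨z, hz, hmax⟩ := hs.exists_isMaxOn hne l.continuous.continuousOn
  have h : IsExposed ℝ s (l.toExposed s) := ContinuousLinearMap.toExposed.isExposed
  obtain ⟨v, hv⟩ := (h.isCompact hs).extremePoints_nonempty ⟨z, hz, hmax⟩
  exact ⟨v, h.isExtreme.extremePoints_subset_extremePoints hv, hv.1.2⟩

end ExtremePoints

theorem IsCompact.subset_Icc_of_extremePoints_subset {ι : Type*} {s : Set (ι → ℝ)}
    (hs : IsCompact s) {a b : ι → ℝ} (h : s.extremePoints ℝ ⊆ Set.Icc a b) :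
    s ⊆ Set.Icc a b := by
  intro x hx
  refine ⟨fun j => ?_, fun j => ?_⟩
  · obtain ⟨v, hv, hmax⟩ := hs.exists_mem_extremePoints_isMaxOn ⟨x, hx⟩
      (-ContinuousLinearMap.proj j)
    have : -x j ≤ -v j := hmax hx
    linarith [(h hv).1 j]
  · obtain ⟨v, hv, hmax⟩ := hs.exists_mem_extremePoints_isMaxOn ⟨x, hx⟩
      (ContinuousLinearMap.proj j)
    exact (hmax hx).trans ((h hv).2 j)

theorem mem_extremePoints_of_subset_Icc {ι : Type*} {s : Set (ι → ℝ)}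
    (hs : s ⊆ Set.Icc 0 1) {x : ι → ℝ} (hx : x ∈ s) (h01 : ∀ j, x j = 0 ∨ x j = 1) :
    x ∈ s.extremePoints ℝ := by
  refine inter_extremePoints_subset_extremePoints_of_subset hs ⟨hx, ?_⟩
  rw [← Set.pi_univ_Icc, extremePoints_pi]
  intro j _
  simpa [Set.extremePoints_Icc zero_le_one] using h01 j

theorem isClosed_polyAB {mA mB n : ℕ} (A : Matrix (Fin mA) (Fin n) ℝ) (b : Fin mA → ℝ)
    (B : Matrix (Fin mB) (Fin n) ℝ) (d : Fin mB → ℝ) : IsClosed (PolyAB A b B d) := by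
  have hA : Continuous (A *ᵥ ·) := continuous_const.matrix_mulVec continuous_id
  have hB : Continuous (B *ᵥ ·) := continuous_const.matrix_mulVec continuous_id
  simp only [PolyAB, Set.ofPred_and, Set.ofPred_forall]
  exact (isClosed_eq hA continuous_const).inter <|
    isClosed_iInter fun i => isClosed_le ((continuous_apply i).comp hB) continuous_const

theorem exists_tight_row_of_forall_pos_notMem_polyAB {mA mB n : ℕ} {A : Matrix (Fin mA) (Fin n) ℝ}
    {b : Fin mA → ℝ} {B : Matrix (Fin mB) (Fin n) ℝ} {d : Fin mB → ℝ} {x g : Fin n → ℝ}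
    (hx : x ∈ PolyAB A b B d) (hAg : A *ᵥ g = 0)
    (hmax : ∀ ε : ℝ, 0 < ε → x + ε • g ∉ PolyAB A b B d) :
    ∃ i, (B *ᵥ x) i = d i ∧ 0 < (B *ᵥ g) i := by
  by_contra! h
  have hrow (i : Fin mB) : ∀ᶠ ε in nhdsWithin (0 : ℝ) (Set.Ioi 0),
      (B *ᵥ x) i + ε * (B *ᵥ g) i ≤ d i := by
    rcases (hx.2 i).lt_or_eq with hlt | heq
    · have hcont : Continuous fun ε : ℝ => (B *ᵥ x) i + ε * (B *ᵥ g) i := by fun_prop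
      exact nhdsWithin_le_nhds <| (hcont.tendsto' 0 _ (by simp)).eventually
        (eventually_le_nhds hlt)
    · filter_upwards [self_mem_nhdsWithin] with ε hε
      nlinarith [h i heq, Set.mem_Ioi.1 hε]
  obtain ⟨ε, hrows, hε⟩ := ((Filter.eventually_all.2 hrow).and self_mem_nhdsWithin).exists
  refine hmax ε hε ⟨by simp [mulVec_add, mulVec_smul, hx.1, hAg], fun i => ?_⟩
  simpa [mulVec_add, mulVec_smul] using hrows i

theorem mem_bot_of_eq_zero_or_eq_one {t : ℝ} (ht : t = 0 ∨ t = 1) : t ∈ (⊥ : Subring ℝ) := by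
  rcases ht with rfl | rfl
  exacts [zero_mem _, one_mem _]

theorem eq_zero_or_eq_one_of_mem_bot {t : ℝ} (ht : t ∈ (⊥ : Subring ℝ)) (h0 : 0 ≤ t)
    (h1 : t ≤ 1) : t = 0 ∨ t = 1 := by
  obtain ⟨m, rfl⟩ := Subring.mem_bot.1 ht
  have h0 : 0 ≤ m := by exact_mod_cast h0
  have h1 : m ≤ 1 := by exact_mod_cast h1
  interval_cases m <;> simp

theorem zeroOne_of_maximal_circuit_step {mA mB n : ℕ} {A : Matrix (Fin mA) (Fin n) ℝ}
    {b : Fin mA → ℝ} {B : Matrix (Fin mB) (Fin n) ℝ} {d : Fin mB → ℝ}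
    (hTU : (fromRows A B).IsTotallyUnimodular) (hcomp : IsCompact (PolyAB A b B d))
    (hbox : PolyAB A b B d ⊆ Set.Icc 0 1)
    (h01 : ∀ v ∈ (PolyAB A b B d).extremePoints ℝ, ∀ j, v j = 0 ∨ v j = 1)
    {x g : Fin n → ℝ} {α : ℝ} (hx : ∀ j, x j = 0 ∨ x j = 1) (hg : IsCircuit A B g)
    (hxα : x + α • g ∈ PolyAB A b B d) (hmax : ∀ β, α < β → x + β • g ∉ PolyAB A b B d) :
    ∀ j, (x + α • g) j = 0 ∨ (x + α • g) j = 1 := by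
  obtain ⟨i, htight, hpos⟩ := exists_tight_row_of_forall_pos_notMem_polyAB hxα hg.1 fun ε hε => by
    simpa [add_assoc, add_smul] using hmax (α + ε) (by linarith)
  have hBg : (B *ᵥ g) i = 1 := by
    obtain ⟨s, hs⟩ := hg.mulVec_apply_mem_range hTU i
    rw [← hs] at hpos ⊢
    rcases s with _ | _ | _ <;> [simp at hpos; norm_num at hpos; rfl]
  obtain ⟨v, hv, hvmax⟩ := hcomp.exists_mem_extremePoints_isMaxOn ⟨_, hxα⟩
    (LinearMap.toContinuousLinearMap ((LinearMap.proj i).comp B.mulVecLin))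
  have hvi : (B *ᵥ v) i = d i := le_antisymm (hv.1.2 i) (htight ▸ hvmax hxα)
  have hα : α = (B *ᵥ v) i - (B *ᵥ x) i := by
    rw [mulVec_add, mulVec_smul, Pi.add_apply, Pi.smul_apply, hBg, smul_eq_mul, mul_one] at htight
    linarith
  have hBTU : B.IsTotallyUnimodular := hTU.submatrix Sum.inr id
  intro j
  refine eq_zero_or_eq_one_of_mem_bot ?_ ((hbox hxα).1 j) ((hbox hxα).2 j)
  refine add_mem (mem_bot_of_eq_zero_or_eq_one (hx j)) (mul_mem ?_ ?_)
  · rw [hα]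
    exact sub_mem (hBTU.mulVec_apply_mem_bot (fun j => mem_bot_of_eq_zero_or_eq_one (h01 v hv j)) i)
      (hBTU.mulVec_apply_mem_bot (fun j => mem_bot_of_eq_zero_or_eq_one (hx j)) i)
  · obtain ⟨gz, hgz, -⟩ := hg.2.2.1
    exact Subring.mem_bot.2 ⟨gz j, (hgz j).symm⟩

theorem IsCircuitWalk.mem {n k : ℕ} {P : Set (Fin n → ℝ)} {Circ : (Fin n → ℝ) → Prop}
    {y : Fin (k + 1) → Fin n → ℝ} (hy : IsCircuitWalk P Circ y) (i : Fin (k + 1)) : y i ∈ P :=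
  Fin.lastCases hy.2.1.1 (fun i => (hy.2.2 i).1) i

theorem IsCircuitWalk.induction {n k : ℕ} {P : Set (Fin n → ℝ)} {Circ : (Fin n → ℝ) → Prop}
    {y : Fin (k + 1) → Fin n → ℝ} (hy : IsCircuitWalk P Circ y) {Q : (Fin n → ℝ) → Prop}
    (h0 : Q (y 0))
    (hstep : ∀ (x g : Fin n → ℝ) (α : ℝ), Q x → Circ g → x + α • g ∈ P →
      (∀ β, α < β → x + β • g ∉ P) → Q (x + α • g))
    (i : Fin (k + 1)) : Q (y i) := by
  induction i using Fin.induction with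
  | zero => exact h0
  | succ i ih =>
    obtain ⟨-, g, α, hg, -, hsucc, hmax⟩ := hy.2.2 i
    rw [hsucc]
    exact hstep _ g α ih hg (hsucc ▸ hy.mem i.succ) hmax

theorem circuit_walks_vertex_of_totallyUnimodular_zeroOne_general
    {mA mB n : ℕ} (A : Matrix (Fin mA) (Fin n) ℝ) (b : Fin mA → ℝ)
    (B : Matrix (Fin mB) (Fin n) ℝ) (d : Fin mB → ℝ)
    (hTU : (Matrix.fromRows A B).IsTotallyUnimodular)
    (hbounded : Bornology.IsBounded (PolyAB A b B d))
    (h01 : ∀ v ∈ (PolyAB A b B d).extremePoints ℝ, ∀ j, v j = 0 ∨ v j = 1) :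
    ∀ (k : ℕ) (y : Fin (k + 1) → Fin n → ℝ),
      IsCircuitWalk (PolyAB A b B d) (IsCircuit A B) y →
        IsVertexWalk (PolyAB A b B d) y := by
  intro k y hy i
  have hcomp := Metric.isCompact_of_isClosed_isBounded (isClosed_polyAB A b B d) hbounded
  have hbox : PolyAB A b B d ⊆ Set.Icc 0 1 :=
    hcomp.subset_Icc_of_extremePoints_subset fun v hv =>
      ⟨fun j => by rcases h01 v hv j with h | h <;> simp [h],
        fun j => by rcases h01 v hv j with h | h <;> simp [h]⟩
  have hy01 : ∀ j, y i j = 0 ∨ y i j = 1 :=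
    IsCircuitWalk.induction hy (h01 _ hy.1) (fun _ _ _ hx hg hxα hmax =>
      zeroOne_of_maximal_circuit_step hTU hcomp hbox h01 hx hg hxα hmax) i
  exact mem_extremePoints_of_subset_Icc hbox (IsCircuitWalk.mem hy i) hy01

theorem circuit_walks_vertex_of_totallyUnimodular_zeroOne
    {mA mB n : ℕ} (A : Matrix (Fin mA) (Fin n) ℝ) (b : Fin mA → ℝ)
    (B : Matrix (Fin mB) (Fin n) ℝ) (d : Fin mB → ℝ)
    (hpointed : ((PolyAB A b B d).extremePoints ℝ).Nonempty)
    (hTU : (Matrix.fromRows A B).IsTotallyUnimodular)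
    (hbounded : Bornology.IsBounded (PolyAB A b B d))
    (h01 : ∀ v ∈ (PolyAB A b B d).extremePoints ℝ, ∀ j, v j = 0 ∨ v j = 1) :
    ∀ (k : ℕ) (y : Fin (k + 1) → Fin n → ℝ),
      IsCircuitWalk (PolyAB A b B d) (IsCircuit A B) y →
        IsVertexWalk (PolyAB A b B d) y :=
  circuit_walks_vertex_of_totallyUnimodular_zeroOne_general A b B d hTU hbounded h01
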